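/- arXiv:2307.09399 — 2 statements merged into one kernel-verified Lean document; each statement's English description precedes it below -/
import Mathlib

section
/- For all integers c ≥ 5 and g ≥ 2, t_p(c,g) = t_p(c−2,g) + t_p(c−2,g−1). -/
/-!
Write `c' = ⌊(c+1)/2⌋` and `k = c' - g`. Up to the sign `(-1)^(k-1)`, `t_p(c,g)` is the partial
alternating sum of the column `n ↦ binom(n+g-1, n)` of Pascal's triangle, and passing from `c` to
`c - 2` lowers `c'` by one. Applying Pascal's rule termwise and shifting the index shows that the
partial sum of length `k+1` for `g` is the one for `g-1` minus the one of length `k` for `g`;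
the signs turn this into the stated recursion.
-/

/-- `tpKnot c g` is t_p(c,g), the number of words of palindromic type representing
2-bridge knots of crossing number `c` and genus `g`, given by the explicit formula
t_p(c,g) = (-1)^(c'-g-1) * Σ_{n=0}^{c'-g-1} (-1)^n * binom(n+g-1, n) with
c' = ⌊(c+1)/2⌋, the sum being empty when c' - g - 1 < 0, and t_p(c,0) = 0. -/
def tpKnot (c g : ℕ) : ℤ :=
  if g = 0 then 0
  else (-1 : ℤ) ^ ((c + 1) / 2 - g - 1) *
    ∑ n ∈ Finset.range ((c + 1) / 2 - g), (-1 : ℤ) ^ n * (Nat.choose (n + g - 1) n)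

open Finset

def altHockeySum (k h : ℕ) : ℤ :=
  ∑ n ∈ range k, (-1 : ℤ) ^ n * ((n + h).choose n : ℕ)

theorem altHockeySum_succ_succ (k h : ℕ) :
    altHockeySum (k + 1) (h + 1) = altHockeySum (k + 1) h - altHockeySum k (h + 1) := by
  have pascal (n : ℕ) : ((n + 1 + (h + 1)).choose (n + 1) : ℤ) =
      ((n + (h + 1)).choose n : ℕ) + ((n + 1 + h).choose (n + 1) : ℕ) := by
    rw [show n + 1 + (h + 1) = n + h + 1 + 1 by omega, Nat.choose_succ_succ,
      show n + 1 + h = n + h + 1 by omega, show n + (h + 1) = n + h + 1 by omega]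
    push_cast
    ring
  simp only [altHockeySum, sum_range_succ' _ k, pascal, pow_succ, mul_add, sum_add_distrib,
    mul_neg_one, neg_mul, sum_neg_distrib, Nat.choose_zero_right]
  ring

def signedAltHockeySum (k h : ℕ) : ℤ :=
  (-1 : ℤ) ^ (k - 1) * altHockeySum k h

theorem signedAltHockeySum_pascal (k h : ℕ) :
    signedAltHockeySum k (h + 1) =
      signedAltHockeySum (k - 1) (h + 1) + signedAltHockeySum k h := by
  cases k with
  | zero => simp [signedAltHockeySum, altHockeySum]
  | succ k =>
    cases k with
    | zero => simp [signedAltHockeySum, altHockeySum]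
    | succ k =>
      simp only [signedAltHockeySum, altHockeySum_succ_succ (k + 1) h, Nat.add_sub_cancel,
        pow_succ]
      ring

theorem tpKnot_succ (c h : ℕ) :
    tpKnot c (h + 1) = signedAltHockeySum ((c + 1) / 2 - (h + 1)) h := by
  simp only [tpKnot, signedAltHockeySum, altHockeySum, Nat.add_sub_cancel, Nat.sub_sub,
    ← add_assoc, if_neg (Nat.succ_ne_zero h)]

theorem tpKnot_pascal_general (c g : ℕ) (hg : 2 ≤ g) :
    tpKnot c g = tpKnot (c - 2) g + tpKnot (c - 2) (g - 1) := by
  obtain ⟨h, rfl⟩ : ∃ h, g = h + 2 := ⟨g - 2, by omega⟩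
  rw [show h + 2 - 1 = h + 1 from rfl, tpKnot_succ, tpKnot_succ, tpKnot_succ,
    show (c - 2 + 1) / 2 - (h + 1 + 1) = (c + 1) / 2 - (h + 1 + 1) - 1 by omega,
    show (c - 2 + 1) / 2 - (h + 1) = (c + 1) / 2 - (h + 1 + 1) by omega]
  exact signedAltHockeySum_pascal _ h

/-- For all integers c ≥ 5 and g ≥ 2, t_p(c,g) = t_p(c−2,g) + t_p(c−2,g−1). -/
theorem tpKnot_pascal (c g : ℕ) (hc : 5 ≤ c) (hg : 2 ≤ g) :
    tpKnot c g = tpKnot (c - 2) g + tpKnot (c - 2) (g - 1) :=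
  tpKnot_pascal_general c g hg
end

section
/- For all integers c ≥ 5, the total genus satisfies the recurrence g(c) = g(c−1) + 2·g(c−2) + t(c−2) + t(c−3). -/
/-- `tKnot c g` is t(c,g), the number of words in the partially double counted set T(c)
representing 2-bridge knots of crossing number `c` and genus `g`, given by the explicit
formula t(c,g) = (-1)^(c-1) * Σ_{n=0}^{c-2g-1} (-1)^n * binom(n+2g-1, n), the sum being
empty when c - 2g - 1 < 0, and t(c,0) = 0. -/
def tKnot (c g : ℕ) : ℤ :=
  if g = 0 then 0
  else (-1 : ℤ) ^ (c - 1) *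
    ∑ n ∈ Finset.range (c - 2 * g), (-1 : ℤ) ^ n * (Nat.choose (n + 2 * g - 1) n)

/-- `tTotal c` is t(c) = Σ_{g=1}^{⌊(c−1)/2⌋} t(c,g), the number of words in T(c). -/
def tTotal (c : ℕ) : ℤ := ∑ g ∈ Finset.Icc 1 ((c - 1) / 2), tKnot c g

/-- `gTotal c` is the total genus g(c) = Σ_{i=1}^{⌊(c−1)/2⌋} i·t(c,i) of T(c). -/
def gTotal (c : ℕ) : ℤ := ∑ i ∈ Finset.Icc 1 ((c - 1) / 2), (i : ℤ) * tKnot c i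

/-!
Write t(c,g) = (-1)^(c-1) S(2g, c-2g) with S(N, m) = Σ_{n<m} (-1)^n binom(n+N-1, n).
Applying Pascal's rule twice gives S(N+2, m) + 2 S(N+2, m-1) + S(N+2, m-2) = S(N, m)
(on generating functions in m this is multiplication by (1+x)^2), hence
t(c,g) = 2 t(c-1,g) - t(c-2,g) + t(c-2,g-1), where at g = 1 the last term has to be read off
the formula, which gives (-1)^(c-1) and not t(c-2,0) = 0. Weighting by g and summing over g yields
g(c) = 2 g(c-1) + t(c-2) + (-1)^(c-1), and adding this to its instance at c-1 cancels the signs.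
-/

open Finset

/-- Truncated subtraction makes `binom(n - 1, n)` the indicator of `n = 0` when `N = 0`. -/
def altChooseSum (N m : ℕ) : ℤ := ∑ n ∈ range m, (-1 : ℤ) ^ n * (Nat.choose (n + N - 1) n)

lemma altChooseSum_zero_left (m : ℕ) : altChooseSum 0 (m + 1) = 1 := by
  rw [altChooseSum, sum_range_succ']
  simp

lemma altChooseSum_succ (N m : ℕ) :
    altChooseSum N (m + 1) = altChooseSum N m + (-1 : ℤ) ^ m * (Nat.choose (m + N - 1) m) :=
  sum_range_succ _ _

lemma choose_add_two_add_choose (a b : ℕ) :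
    (a + 2).choose (b + 2) + a.choose b = a.choose (b + 2) + 2 * (a + 1).choose (b + 1) := by
  have h₁ : (a + 2).choose (b + 2) = (a + 1).choose (b + 1) + (a + 1).choose (b + 2) :=
    Nat.choose_succ_succ _ _
  have h₂ : (a + 1).choose (b + 2) = a.choose (b + 1) + a.choose (b + 2) :=
    Nat.choose_succ_succ _ _
  have h₃ : (a + 1).choose (b + 1) = a.choose b + a.choose (b + 1) :=
    Nat.choose_succ_succ _ _
  omega

lemma altChooseSum_add_two_add_two (N m : ℕ) :
    altChooseSum (N + 2) (m + 2) + 2 * altChooseSum (N + 2) (m + 1) + altChooseSum (N + 2) m =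
      altChooseSum N (m + 2) := by
  induction m with
  | zero =>
    norm_num [altChooseSum, sum_range_succ, add_comm]
    ring
  | succ m ih =>
    have hp : ((m + 2 + (N + 2) - 1).choose (m + 2) : ℤ) + (m + (N + 2) - 1).choose m =
        (m + 2 + N - 1).choose (m + 2) + 2 * (m + 1 + (N + 2) - 1).choose (m + 1) := by
      rw [show m + 2 + (N + 2) - 1 = m + N + 1 + 2 by omega, show m + (N + 2) - 1 = m + N + 1 by omega,
        show m + 2 + N - 1 = m + N + 1 by omega, show m + 1 + (N + 2) - 1 = m + N + 1 + 1 by omega]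
      exact_mod_cast choose_add_two_add_choose (m + N + 1) m
    linear_combination ih + altChooseSum_succ (N + 2) (m + 2) + 2 * altChooseSum_succ (N + 2) (m + 1)
      + altChooseSum_succ (N + 2) m - altChooseSum_succ N (m + 2) + (-1 : ℤ) ^ m * hp

lemma altChooseSum_add_two (N m : ℕ) :
    altChooseSum (N + 2) m + 2 * altChooseSum (N + 2) (m - 1) + altChooseSum (N + 2) (m - 2) =
      altChooseSum N m := by
  match m with
  | 0 => simp [altChooseSum]
  | 1 => simp [altChooseSum]
  | m + 2 => exact altChooseSum_add_two_add_two N m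

lemma tKnot_eq_zero {c g : ℕ} (h : g = 0 ∨ c ≤ 2 * g) : tKnot c g = 0 := by
  rcases h with rfl | h
  · rfl
  · simp [tKnot, Nat.sub_eq_zero_of_le h]

lemma tKnot_add_ite (d g : ℕ) :
    tKnot (d + 1) g + (if g = 0 then (-1 : ℤ) ^ d else 0) =
      (-1 : ℤ) ^ d * altChooseSum (2 * g) (d + 1 - 2 * g) := by
  rcases eq_or_ne g 0 with rfl | hg
  · simp [tKnot, altChooseSum_zero_left]
  · simp [tKnot, altChooseSum, hg]

lemma tKnot_succ_recurrence (d g : ℕ) :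
    tKnot (d + 3) (g + 1) = 2 * tKnot (d + 2) (g + 1) - tKnot (d + 1) (g + 1) + tKnot (d + 1) g
      + (if g = 0 then (-1 : ℤ) ^ d else 0) := by
  have h₃ := tKnot_add_ite (d + 2) (g + 1)
  have h₂ := tKnot_add_ite (d + 1) (g + 1)
  have h₁ := tKnot_add_ite d (g + 1)
  have h₀ := tKnot_add_ite d g
  have key := altChooseSum_add_two (2 * g) (d + 1 - 2 * g)
  simp only [add_eq_zero, one_ne_zero, and_false, if_false, add_zero,
    show 2 * (g + 1) = 2 * g + 2 by ring, show d + 2 + 1 - (2 * g + 2) = d + 1 - 2 * g by omega,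
    show d + 1 + 1 - (2 * g + 2) = d + 1 - 2 * g - 1 by omega,
    show d + 1 - (2 * g + 2) = d + 1 - 2 * g - 2 by omega] at h₃ h₂ h₁
  linear_combination h₃ - 2 * h₂ + h₁ - h₀ + (-1 : ℤ) ^ d * key

lemma sum_Icc_mul_tKnot_eq_sum_range (w : ℕ → ℤ) {c B : ℕ} (h : c ≤ 2 * B) :
    ∑ g ∈ Icc 1 ((c - 1) / 2), w g * tKnot c g = ∑ g ∈ range B, w g * tKnot c g := by
  refine sum_subset (fun g hg => ?_) fun g _ hg => ?_
  · simp only [mem_Icc, mem_range] at hg ⊢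
    omega
  · rw [tKnot_eq_zero (by simp only [mem_Icc] at hg; omega), mul_zero]

lemma gTotal_eq_sum_range {c B : ℕ} (h : c ≤ 2 * B) :
    gTotal c = ∑ g ∈ range B, (g : ℤ) * tKnot c g :=
  sum_Icc_mul_tKnot_eq_sum_range _ h

lemma tTotal_eq_sum_range {c B : ℕ} (h : c ≤ 2 * B) :
    tTotal c = ∑ g ∈ range B, tKnot c g := by
  simpa [tTotal] using sum_Icc_mul_tKnot_eq_sum_range 1 h

lemma gTotal_add_three (d : ℕ) :
    gTotal (d + 3) = 2 * gTotal (d + 2) + tTotal (d + 1) + (-1 : ℤ) ^ d := by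
  have shift {c : ℕ} (hc : c ≤ d + 3) :
      gTotal c = ∑ g ∈ range (d + 3), ((g : ℤ) + 1) * tKnot c (g + 1) := by
    rw [gTotal_eq_sum_range (B := d + 4) (by omega), sum_range_succ']
    simp
  have hrec : ∑ g ∈ range (d + 3), ((g : ℤ) + 1) * tKnot (d + 3) (g + 1) =
      ∑ g ∈ range (d + 3), (2 * (((g : ℤ) + 1) * tKnot (d + 2) (g + 1))
        - ((g : ℤ) + 1) * tKnot (d + 1) (g + 1) + (g : ℤ) * tKnot (d + 1) g + tKnot (d + 1) g
        + if g = 0 then (-1 : ℤ) ^ d else 0) := by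
    refine sum_congr rfl fun g _ => ?_
    rw [tKnot_succ_recurrence]
    split_ifs with hg
    · subst hg
      ring
    · ring
  have hG₂ := shift (c := d + 2) (by omega)
  have hG₁ := shift (c := d + 1) (by omega)
  have hG₁' := gTotal_eq_sum_range (c := d + 1) (B := d + 3) (by omega)
  have hT₁ := tTotal_eq_sum_range (c := d + 1) (B := d + 3) (by omega)
  rw [shift le_rfl, hrec]
  simp only [sum_add_distrib, sum_sub_distrib, ← mul_sum, sum_ite_eq', mem_range,
    if_pos (show 0 < d + 3 by omega)]
  linear_combination -2 * hG₂ + hG₁ - hG₁' - hT₁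

/-- For all integers c ≥ 5, the total genus satisfies
g(c) = g(c−1) + 2·g(c−2) + t(c−2) + t(c−3). -/
theorem gTotal_recurrence (c : ℕ) (hc : 5 ≤ c) :
    gTotal c = gTotal (c - 1) + 2 * gTotal (c - 2) + tTotal (c - 2) + tTotal (c - 3) := by
  obtain ⟨d, rfl⟩ : ∃ d, c = d + 4 := ⟨c - 4, by omega⟩
  have h₄ := gTotal_add_three (d + 1)
  have h₃ := gTotal_add_three d
  simp only [show d + 4 - 1 = d + 3 by omega, show d + 4 - 2 = d + 2 by omega,
    show d + 4 - 3 = d + 1 by omega]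
  linear_combination h₄ + h₃
end
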